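/- Every nondiscriminating Conservative Stable Standard of Behavior σ for the coalitional repeated game situation (γ^C, Γ) satisfies σ(G) ⊆ PCEP for every position G. -/

import Mathlib

open Set

section Setup

variable {N : Type*} [Fintype N] [DecidableEq N] {Z : N → Type*}

/-- A stage-game action profile. -/
abbrev Profile (Z : N → Type*) := ∀ i, Z i

/-- An infinite path of action profiles. -/
abbrev RPath (Z : N → Type*) := ℕ → Profile Z

/-- The profile played in period `τ` when coalition `C` deviates to `ζ` (off `C`, players follow `x τ`). -/
def devProfile (x : RPath Z) (C : Finset N) (τ : ℕ) (ζ : Profile Z) : Profile Z :=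
  fun i => if i ∈ C then ζ i else x τ i

/-- The spliced path `(x; ζ^C_τ; y)`: follow `x` before period `τ`, play the deviation profile at `τ`,
and follow `y` afterwards.  Periods are indexed from `0`. -/
def splice (x : RPath Z) (C : Finset N) (τ : ℕ) (ζ : Profile Z) (y : RPath Z) : RPath Z :=
  fun t => if t < τ then x t else if t = τ then devProfile x C τ ζ else y (t - τ - 1)

/-- Discounted payoff `U_i(x) = (1-δ) ∑ δ^t u_i(x_t)`. -/
noncomputable def disc (u : N → Profile Z → ℝ) (δ : ℝ) (i : N) (x : RPath Z) : ℝ :=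
  (1 - δ) * ∑' t : ℕ, δ ^ t * u i (x t)

/-- The coalitional enforceability operator `Ψ`. -/
def Psi (u : N → Profile Z → ℝ) (δ : ℝ) (Y : Set (RPath Z)) : Set (RPath Z) :=
  {x | ∀ C : Finset N, C.Nonempty → ∀ τ : ℕ, ∀ ζ : Profile Z,
    ∃ p : N → RPath Z, (∀ i, p i ∈ Y) ∧
      ∃ i ∈ C, disc u δ i x ≥ disc u δ i (splice x C τ ζ (p i))}

/-- A history (position) is a finite list of past action profiles. -/
abbrev Hist (Z : N → Type*) := List (Profile Z)

/-- The history reached after `n` periods of following plan `f` from history `h`. -/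
def planHist (f : Hist Z → Profile Z) (h : Hist Z) : ℕ → Hist Z
  | 0 => h
  | n + 1 => planHist f h n ++ [f (planHist f h n)]

/-- The continuation path prescribed by plan `f` after history `h`. -/
def planPath (f : Hist Z → Profile Z) (h : Hist Z) : RPath Z :=
  fun n => f (planHist f h n)

/-- The position induced from `G` when coalition `C` deviates from path `x` in period `τ` via `ζ`. -/
def devHistory (G : Hist Z) (x : RPath Z) (C : Finset N) (τ : ℕ) (ζ : Profile Z) : Hist Z :=
  G ++ (List.ofFn fun t : Fin τ => x t) ++ [devProfile x C τ ζ]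

/-- A Perfect Coalitional Equilibrium: after every history, every one-shot coalitional deviation
leaves some member of the deviating coalition no better off, given the plan's continuation. -/
def IsPCE (u : N → Profile Z → ℝ) (δ : ℝ) (f : Hist Z → Profile Z) : Prop :=
  ∀ h : Hist Z, ∀ C : Finset N, C.Nonempty → ∀ τ : ℕ, ∀ ζ : Profile Z,
    ∃ i ∈ C, disc u δ i (planPath f h) ≥
      disc u δ i (splice (planPath f h) C τ ζ (planPath f (devHistory h (planPath f h) C τ ζ)))

/-- The set of Perfect Coalitional Equilibrium paths. -/
def PCEP (u : N → Profile Z → ℝ) (δ : ℝ) : Set (RPath Z) :=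
  {x | ∃ f : Hist Z → Profile Z, IsPCE u δ f ∧ planPath f [] = x}

/-- Payoff at position `G`: `u_i(G)(x) = a_i(G) + δ^{|G|} U_i(x)`. -/
noncomputable def posPayoff (u : N → Profile Z → ℝ) (δ : ℝ) (i : N) (G : Hist Z)
    (x : RPath Z) : ℝ :=
  (1 - δ) * (∑ t : Fin G.length, δ ^ (t : ℕ) * u i (G.get t)) + δ ^ G.length * disc u δ i x

/-- The conservative dominion of position `G` relative to the standard of behavior `σ`. -/
def CDOM (u : N → Profile Z → ℝ) (δ : ℝ) (σ : Hist Z → Set (RPath Z)) (G : Hist Z) :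
    Set (RPath Z) :=
  {x | ∃ C : Finset N, C.Nonempty ∧ ∃ τ : ℕ, ∃ ζ : Profile Z,
    (σ (devHistory G x C τ ζ)).Nonempty ∧
    ∀ y ∈ σ (devHistory G x C τ ζ), ∀ i ∈ C,
      posPayoff u δ i (devHistory G x C τ ζ) y > posPayoff u δ i G x}

/-- A standard of behavior is nondiscriminating if it assigns the same set to every position. -/
def Nondiscriminating (σ : Hist Z → Set (RPath Z)) : Prop := ∀ G H, σ G = σ H

/-- Conservative internal stability. -/
def ConsInternallyStable (u : N → Profile Z → ℝ) (δ : ℝ) (σ : Hist Z → Set (RPath Z)) : Prop :=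
  ∀ G, σ G ∩ CDOM u δ σ G = ∅

/-- Conservative external stability. -/
def ConsExternallyStable (u : N → Profile Z → ℝ) (δ : ℝ) (σ : Hist Z → Set (RPath Z)) : Prop :=
  ∀ G, (σ G)ᶜ ⊆ CDOM u δ σ G

end Setup

/-!
Internal stability of a nondiscriminating standard of behaviour `σ` says that no path of
`S = σ(G)` is conservatively dominated; since every deviation position is assigned the same
set `S`, every one-shot coalitional deviation from a path of `S` can be answered by a
continuation in `S` that leaves some deviator no better off, i.e. `S ⊆ Ψ(S)`.
Such a self-generating set consists of equilibrium paths: the simple strategy that follows a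
path of `S` and, after a deviation from it, switches to the punishing continuation supplied by
`S ⊆ Ψ(S)` is a Perfect Coalitional Equilibrium, because with discounting the comparison of two
paths that agree up to some period reduces to the comparison of their continuations.
-/

open Finset

section Paths

variable {N : Type*} {Z : N → Type*}

def shiftPath (x : RPath Z) (k : ℕ) : RPath Z := fun t => x (k + t)

@[simp] lemma shiftPath_zero (x : RPath Z) : shiftPath x 0 = x := by
  funext t; simp [shiftPath]

variable {u : N → Profile Z → ℝ} {δ : ℝ} {i : N} {M : ℝ}

lemma summable_discounted (hM : ∀ a, |u i a| ≤ M) (hδ0 : 0 ≤ δ) (hδ1 : δ < 1) (x : RPath Z) :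
    Summable fun t => δ ^ t * u i (x t) := by
  refine ((summable_geometric_of_lt_one hδ0 hδ1).mul_right M).of_norm_bounded fun t => ?_
  rw [norm_mul, norm_pow, Real.norm_of_nonneg hδ0, Real.norm_eq_abs]
  exact mul_le_mul_of_nonneg_left (hM _) (pow_nonneg hδ0 t)

lemma disc_eq_sum_add_shiftPath (hM : ∀ a, |u i a| ≤ M) (hδ0 : 0 ≤ δ) (hδ1 : δ < 1)
    (x : RPath Z) (n : ℕ) :
    disc u δ i x = (1 - δ) * ∑ t ∈ range n, δ ^ t * u i (x t)
      + δ ^ n * disc u δ i (shiftPath x n) := by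
  have htail : ∑' t, δ ^ (t + n) * u i (x (t + n))
      = δ ^ n * ∑' t, δ ^ t * u i (shiftPath x n t) := by
    rw [← tsum_mul_left]
    congr 1; funext t
    rw [shiftPath, pow_add, add_comm n t]; ring
  rw [disc, disc, ← (summable_discounted hM hδ0 hδ1 x).sum_add_tsum_nat_add n, htail]
  ring

lemma disc_le_disc_iff_shiftPath (hM : ∀ a, |u i a| ≤ M) (hδ0 : 0 < δ) (hδ1 : δ < 1)
    {a b : RPath Z} {k : ℕ} (hab : ∀ t < k, a t = b t) :
    disc u δ i a ≤ disc u δ i b ↔ disc u δ i (shiftPath a k) ≤ disc u δ i (shiftPath b k) := by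
  have hprefix : ∑ t ∈ range k, δ ^ t * u i (a t) = ∑ t ∈ range k, δ ^ t * u i (b t) :=
    sum_congr rfl fun t ht => by rw [hab t (mem_range.mp ht)]
  rw [disc_eq_sum_add_shiftPath hM hδ0.le hδ1 a k, disc_eq_sum_add_shiftPath hM hδ0.le hδ1 b k,
    hprefix, add_le_add_iff_left, mul_le_mul_iff_right₀ (pow_pos hδ0 k)]

lemma posPayoff_nil (x : RPath Z) : posPayoff u δ i [] x = disc u δ i x := by
  simp [posPayoff]

lemma posPayoff_ofFn_shiftPath (hM : ∀ a, |u i a| ≤ M) (hδ0 : 0 ≤ δ) (hδ1 : δ < 1)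
    (x : RPath Z) (n : ℕ) :
    posPayoff u δ i (List.ofFn fun t : Fin n => x t) (shiftPath x n) = disc u δ i x := by
  have hsum : ∑ t : Fin (List.ofFn fun t : Fin n => x t).length,
      δ ^ (t : ℕ) * u i ((List.ofFn fun t : Fin n => x t).get t)
        = ∑ t ∈ range n, δ ^ t * u i (x t) := by
    rw [← Fin.sum_univ_eq_sum_range (fun t => δ ^ t * u i (x t)) n]
    exact Fintype.sum_equiv (finCongr List.length_ofFn) _ _ fun t => by simp
  rw [posPayoff, hsum, List.length_ofFn, disc_eq_sum_add_shiftPath hM hδ0 hδ1 x n]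

end Paths

section Deviators

variable {N : Type*} [Fintype N] {Z : N → Type*}

open Classical in
noncomputable def deviators (a z : Profile Z) : Finset N := univ.filter fun i => z i ≠ a i

lemma mem_deviators {a z : Profile Z} {i : N} : i ∈ deviators a z ↔ z i ≠ a i := by
  simp [deviators]

lemma deviators_nonempty {a z : Profile Z} (h : z ≠ a) : (deviators a z).Nonempty :=
  let ⟨i, hi⟩ := Function.ne_iff.mp h
  ⟨i, mem_deviators.mpr hi⟩

end Deviators

section Splice

variable {N : Type*} [DecidableEq N] {Z : N → Type*}

lemma shiftPath_splice_succ (x : RPath Z) (C : Finset N) (τ : ℕ) (ζ : Profile Z) (y : RPath Z) :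
    shiftPath (splice x C τ ζ y) (τ + 1) = y := by
  funext t
  simp only [shiftPath, splice, if_neg (show ¬ τ + 1 + t < τ by omega),
    if_neg (show τ + 1 + t ≠ τ by omega)]
  congr 1; omega

lemma splice_shiftPath (x : RPath Z) (C : Finset N) (k τ : ℕ) (ζ : Profile Z) (y : RPath Z) :
    splice (shiftPath x k) C τ ζ y = shiftPath (splice x C (k + τ) ζ y) k := by
  funext t
  simp only [splice, shiftPath]
  split_ifs <;> first | rfl | omega | (congr 1; omega)

lemma splice_shiftPath_succ_of_devProfile_eq {x : RPath Z} {C : Finset N} {τ : ℕ}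
    {ζ : Profile Z} (h : devProfile x C τ ζ = x τ) :
    splice x C τ ζ (shiftPath x (τ + 1)) = x := by
  funext t
  simp only [splice, shiftPath]
  split_ifs <;> first | rfl | (subst_vars; exact h) | (congr 1; omega)

lemma devHistory_nil (x : RPath Z) (C : Finset N) (τ : ℕ) (ζ : Profile Z) (y : RPath Z) :
    devHistory [] x C τ ζ = List.ofFn fun t : Fin (τ + 1) => splice x C τ ζ y t := by
  rw [List.ofFn_succ', devHistory, List.nil_append, List.concat_eq_append]
  congr 1
  · exact List.ofFn_inj.mpr (funext fun t => (if_pos t.isLt).symm)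
  · simp [splice]

lemma posPayoff_devHistory_nil {u : N → Profile Z → ℝ} {δ : ℝ} {i : N} {M : ℝ}
    (hM : ∀ a, |u i a| ≤ M) (hδ0 : 0 ≤ δ) (hδ1 : δ < 1)
    (x : RPath Z) (C : Finset N) (τ : ℕ) (ζ : Profile Z) (y : RPath Z) :
    posPayoff u δ i (devHistory [] x C τ ζ) y = disc u δ i (splice x C τ ζ y) := by
  have h := posPayoff_ofFn_shiftPath hM hδ0 hδ1 (splice x C τ ζ y) (τ + 1)
  rwa [shiftPath_splice_succ, ← devHistory_nil] at h

variable [Fintype N]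

lemma deviators_devProfile_subset (x : RPath Z) (C : Finset N) (τ : ℕ) (ζ : Profile Z) :
    deviators (x τ) (devProfile x C τ ζ) ⊆ C := by
  intro i hi
  by_contra hiC
  exact mem_deviators.mp hi (if_neg hiC)

lemma devProfile_deviators (x : RPath Z) (τ : ℕ) (z : Profile Z) :
    devProfile x (deviators (x τ) z) τ z = z := by
  funext i
  by_cases hi : i ∈ deviators (x τ) z
  · exact if_pos hi
  · rw [devProfile, if_neg hi]
    exact (not_not.mp (mt mem_deviators.mpr hi)).symm

lemma splice_deviators_devProfile (x : RPath Z) (C : Finset N) (τ : ℕ) (ζ : Profile Z)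
    (y : RPath Z) :
    splice x (deviators (x τ) (devProfile x C τ ζ)) τ (devProfile x C τ ζ) y
      = splice x C τ ζ y := by
  unfold splice
  rw [devProfile_deviators]

end Splice

theorem subset_Psi_of_consInternallyStable {N : Type*} [DecidableEq N] {Z : N → Type*}
    {u : N → Profile Z → ℝ} {δ : ℝ} (hu : ∀ i, ∃ M, ∀ a, |u i a| ≤ M)
    (hδ0 : 0 ≤ δ) (hδ1 : δ < 1) {σ : Hist Z → Set (RPath Z)} (hnd : Nondiscriminating σ)
    (hin : ConsInternallyStable u δ σ) (G : Hist Z) : σ G ⊆ Psi u δ (σ G) := by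
  rw [hnd G []]
  intro x hx C hC τ ζ
  have hundom : x ∉ CDOM u δ σ [] := fun hdom => (hin []).subset ⟨hx, hdom⟩
  have hne : (σ (devHistory [] x C τ ζ)).Nonempty := hnd _ [] ▸ ⟨x, hx⟩
  simp only [CDOM, Set.mem_ofPred_eq, not_exists, not_and, not_forall, not_lt] at hundom
  obtain ⟨y, hy, i, hiC, hle⟩ := hundom C hC τ ζ hne
  obtain ⟨M, hM⟩ := hu i
  rw [posPayoff_devHistory_nil hM hδ0 hδ1, posPayoff_nil] at hle
  exact ⟨fun _ => y, fun _ => hnd _ [] ▸ hy, i, hiC, hle⟩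

namespace SimpleStrategy

section Automaton

variable {N : Type*} {Z : N → Type*} {S : Set (RPath Z)} (P : S → ℕ → Profile Z → S)

/-- The state `(π, k)` means: follow `π ∈ S` from period `k` on. A profile `a ≠ π k` switches
to the continuation `P π k a`; since only `a` is observed, that continuation has to deter
`deviators (π k) a`, which lies inside every coalition able to produce `a`. -/
noncomputable def step (s : S × ℕ) (a : Profile Z) : S × ℕ :=
  open Classical in
  if a = (s.1 : RPath Z) s.2 then (s.1, s.2 + 1) else (P s.1 s.2 a, 0)

noncomputable def state (x₀ : S) (h : Hist Z) : S × ℕ := h.foldl (step P) (x₀, 0)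

noncomputable def plan (x₀ : S) (h : Hist Z) : Profile Z :=
  ((state P x₀ h).1 : RPath Z) (state P x₀ h).2

lemma step_self (π : S) (k : ℕ) : step P (π, k) ((π : RPath Z) k) = (π, k + 1) :=
  if_pos rfl

lemma foldl_step_ofFn (π : S) (n : ℕ) :
    ∀ k, (List.ofFn fun t : Fin n => (π : RPath Z) (k + t)).foldl (step P) (π, k) = (π, k + n) := by
  induction n with
  | zero => intro k; rfl
  | succ n ih =>
    intro k
    rw [List.ofFn_succ, List.foldl_cons, Fin.val_zero, add_zero, step_self]
    simp only [Fin.val_succ, ← add_assoc, add_right_comm k _ 1]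
    rw [ih, add_right_comm, add_assoc]

lemma state_planHist (x₀ : S) (h : Hist Z) (n : ℕ) :
    state P x₀ (planHist (plan P x₀) h n) = ((state P x₀ h).1, (state P x₀ h).2 + n) := by
  induction n with
  | zero => rfl
  | succ n ih =>
    rw [planHist, state, List.foldl_append, ← state, List.foldl_cons, List.foldl_nil, plan, ih,
      step_self, add_assoc]

lemma planPath_plan (x₀ : S) (h : Hist Z) :
    planPath (plan P x₀) h = shiftPath (state P x₀ h).1 (state P x₀ h).2 := by
  funext n
  rw [planPath, plan, state_planHist]
  rfl

lemma planPath_plan_nil (x₀ : S) : planPath (plan P x₀) [] = x₀ := by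
  rw [planPath_plan]
  exact shiftPath_zero _

end Automaton

variable {N : Type*} [DecidableEq N] {Z : N → Type*} {S : Set (RPath Z)}
  (P : S → ℕ → Profile Z → S)

lemma state_devHistory (x₀ : S) (h : Hist Z) (C : Finset N) (τ : ℕ) (ζ : Profile Z) :
    state P x₀ (devHistory h (planPath (plan P x₀) h) C τ ζ)
      = step P ((state P x₀ h).1, (state P x₀ h).2 + τ)
          (devProfile ((state P x₀ h).1 : RPath Z) C ((state P x₀ h).2 + τ) ζ) := by
  rw [devHistory, state, List.foldl_append, List.foldl_append, ← state, planPath_plan]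
  exact congrArg (fun s => step P s _) (foldl_step_ofFn P _ τ _)

theorem isPCE_plan [Fintype N] {u : N → Profile Z → ℝ} {δ : ℝ}
    (hu : ∀ i, ∃ M, ∀ a, |u i a| ≤ M) (hδ0 : 0 < δ) (hδ1 : δ < 1)
    (hP : ∀ (π : S) m a, a ≠ (π : RPath Z) m → ∃ i ∈ deviators ((π : RPath Z) m) a,
      disc u δ i (splice π (deviators ((π : RPath Z) m) a) m a (P π m a)) ≤ disc u δ i π)
    (x₀ : S) : IsPCE u δ (plan P x₀) := by
  intro h C hC τ ζ
  have hdev := state_devHistory P x₀ h C τ ζ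
  rw [planPath_plan P x₀ h] at hdev ⊢
  generalize state P x₀ h = s at hdev ⊢
  obtain ⟨π, k⟩ := s
  rw [planPath_plan, hdev, splice_shiftPath]
  by_cases hconform : devProfile (π : RPath Z) C (k + τ) ζ = (π : RPath Z) (k + τ)
  · obtain ⟨i, hi⟩ := hC
    rw [hconform, step_self, splice_shiftPath_succ_of_devProfile_eq hconform]
    exact ⟨i, hi, le_rfl⟩
  · obtain ⟨i, hi, hle⟩ := hP π (k + τ) _ hconform
    obtain ⟨M, hM⟩ := hu i
    refine ⟨i, deviators_devProfile_subset _ C _ ζ hi, ?_⟩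
    rw [step, if_neg hconform, shiftPath_zero, ← splice_deviators_devProfile]
    exact (disc_le_disc_iff_shiftPath hM hδ0 hδ1 fun t ht => if_pos (by omega)).mp hle

end SimpleStrategy

theorem subset_PCEP_of_subset_Psi {N : Type*} [Fintype N] [DecidableEq N] {Z : N → Type*}
    {u : N → Profile Z → ℝ} {δ : ℝ} (hu : ∀ i, ∃ M, ∀ a, |u i a| ≤ M) (hδ0 : 0 < δ)
    (hδ1 : δ < 1) {S : Set (RPath Z)} (hS : S ⊆ Psi u δ S) : S ⊆ PCEP u δ := by
  have hpunish : ∀ (π : S) m a, ∃ y : S, a ≠ (π : RPath Z) m →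
      ∃ i ∈ deviators ((π : RPath Z) m) a,
        disc u δ i (splice π (deviators ((π : RPath Z) m) a) m a y) ≤ disc u δ i π := by
    intro π m a
    by_cases ha : a = (π : RPath Z) m
    · exact ⟨π, fun hne => absurd ha hne⟩
    · obtain ⟨p, hpS, i, hi, hle⟩ := hS π.2 _ (deviators_nonempty ha) m a
      exact ⟨⟨p i, hpS i⟩, fun _ => ⟨i, hi, hle⟩⟩
  choose P hP using hpunish
  intro x hx
  exact ⟨SimpleStrategy.plan P ⟨x, hx⟩, SimpleStrategy.isPCE_plan P hu hδ0 hδ1 hP _,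
    SimpleStrategy.planPath_plan_nil P _⟩

theorem nondiscriminating_CSSB_subset_PCEP_general {N : Type*} [Fintype N] [DecidableEq N] {Z : N → Type*}
    [∀ i, MetricSpace (Z i)] [∀ i, CompactSpace (Z i)]
    (u : N → Profile Z → ℝ) (δ : ℝ)
    (hu : ∀ i, Continuous (u i)) (hδ0 : 0 < δ) (hδ1 : δ < 1)
    (σ : Hist Z → Set (RPath Z)) (hnd : Nondiscriminating σ)
    (hin : ConsInternallyStable u δ σ) :
    ∀ G, σ G ⊆ PCEP u δ := by
  have hbdd : ∀ i, ∃ M, ∀ a, |u i a| ≤ M := fun i => by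
    obtain ⟨M, hM⟩ := isCompact_univ.exists_bound_of_continuousOn (hu i).continuousOn
    exact ⟨M, fun a => hM a trivial⟩
  exact fun G => subset_PCEP_of_subset_Psi hbdd hδ0 hδ1
    (subset_Psi_of_consInternallyStable hbdd hδ0.le hδ1 hnd hin G)

theorem nondiscriminating_CSSB_subset_PCEP {N : Type*} [Fintype N] [DecidableEq N] {Z : N → Type*}
    [∀ i, MetricSpace (Z i)] [∀ i, CompactSpace (Z i)] [∀ i, Nonempty (Z i)]
    (u : N → Profile Z → ℝ) (δ : ℝ)
    (hu : ∀ i, Continuous (u i)) (hδ0 : 0 < δ) (hδ1 : δ < 1)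
    (σ : Hist Z → Set (RPath Z)) (hnd : Nondiscriminating σ)
    (hin : ConsInternallyStable u δ σ) (hex : ConsExternallyStable u δ σ) :
    ∀ G, σ G ⊆ PCEP u δ :=
  nondiscriminating_CSSB_subset_PCEP_general u δ hu hδ0 hδ1 σ hnd hin
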